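/- Admissible condition for k-spaces: if X, Y, Z are k-spaces and g : X → kM(Y,Z) is continuous, then the function f : X ×_k Y → Z defined by f(x,y) = g(x)(y) is continuous. -/

import Mathlib

open TopologicalSpace Topology

universe u

/-- The k-ification: the final topology on `X` relative to all continuous maps
from compact Hausdorff spaces into `X`. -/
def kTop (X : Type u) [TopologicalSpace X] : TopologicalSpace X :=
  ⨆ (C : CompHaus.{u}) (g : C → X) (_ : Continuous g),
    TopologicalSpace.coinduced g inferInstance

lemma kTop_le {W : Type u} [tW : TopologicalSpace W] : kTop W ≤ tW :=
  iSup_le fun _ => iSup_le fun _ => iSup_le fun hg => continuous_iff_coinduced_le.mp hg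

lemma continuous_kTop_dom_iff {W V : Type u} [TopologicalSpace W] [tV : TopologicalSpace V]
    {f : W → V} :
    Continuous[kTop W, tV] f ↔
      ∀ (C : CompHaus.{u}) (h : C → W), Continuous h → Continuous (f ∘ h) := by
  rw [kTop]
  simp only [continuous_iSup_dom, continuous_coinduced_dom]

-- Instance search times out on this goal, so the chain of instances is given by hand.
lemma CompHaus.locallyCompactSpace (C : CompHaus) : LocallyCompactSpace C :=
  have : R1Space C := T2Space.r1Space
  have : WeaklyLocallyCompactSpace C := instWeaklyLocallyCompactSpaceOfCompactSpace
  WeaklyLocallyCompactSpace.locallyCompactSpace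

/-- Evaluation `C(Y, Z) × Y → Z` need not be continuous, but it becomes continuous once both
arguments are parametrised by a locally compact space `C`: pull the family back to `C(C, Z)`. -/
lemma ContinuousMap.continuous_apply_of_locallyCompact_dom {C X Y Z : Type*}
    [TopologicalSpace C] [LocallyCompactSpace C] [TopologicalSpace X] [TopologicalSpace Y]
    [TopologicalSpace Z] {g : X → C(Y, Z)} (hg : Continuous g) {a : C → X} (ha : Continuous a)
    {b : C → Y} (hb : Continuous b) :
    Continuous fun c => g (a c) (b c) := by
  have hpull : Continuous fun c => (g (a c)).comp ⟨b, hb⟩ :=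
    (ContinuousMap.continuous_precomp _).comp (hg.comp ha)
  exact continuous_eval.comp (hpull.prodMk continuous_id)

theorem kTop_admissible_condition_general {X Y Z : Type u}
    [tX : TopologicalSpace X] [tY : TopologicalSpace Y] [tZ : TopologicalSpace Z]
    (g : X → C(Y, Z)) (hg : Continuous[tX, kTop C(Y, Z)] g) :
    Continuous[kTop (X × Y), tZ] (fun p : X × Y => g p.1 p.2) := by
  refine continuous_kTop_dom_iff.mpr fun C h hh => ?_
  have := C.locallyCompactSpace
  exact ContinuousMap.continuous_apply_of_locallyCompact_dom (continuous_le_rng kTop_le hg)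
    (continuous_fst.comp hh) (continuous_snd.comp hh)

theorem kTop_admissible_condition {X Y Z : Type u}
    [tX : TopologicalSpace X] [tY : TopologicalSpace Y] [tZ : TopologicalSpace Z]
    (hX : kTop X = tX) (hY : kTop Y = tY) (hZ : kTop Z = tZ)
    (g : X → C(Y, Z)) (hg : Continuous[tX, kTop C(Y, Z)] g) :
    Continuous[kTop (X × Y), tZ] (fun p : X × Y => g p.1 p.2) :=
  kTop_admissible_condition_general (tX := tX) (tY := tY) (tZ := tZ) g hg
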